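/- arXiv:1505.05763 — 3 statements merged into one kernel-verified Lean document; each statement's English description precedes it below -/
import Mathlib

section
/- Let q > 1 and let h : Ω → ℝ be measurable. If h belongs to 𝕃_0^{q,∞}, i.e. t^q μ{|h| > t} → 0 as t → +∞, then the maximal function M*(h) := sup_{N ≥ 1} |S_N(h)|/N also belongs to 𝕃_0^{q,∞}, i.e. t^q μ{M*(h) > t} → 0 as t → +∞. -/
/-!
Split `h` at level `s = t / 2`: since `|h| ≤ s + F` with `F = |h| 𝟙{|h| > s}`, an average of
`|h|` along an orbit exceeding `t` forces an average of `F` exceeding `s`. The maximal ergodic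
inequality bounds the measure of the latter set by `s⁻¹ ∫ F`, and the layer-cake formula together
with `μ{|h| > u} ≤ c u^{-q}` for `u ≥ s` gives `∫ F ≤ q / (q - 1) · c s^{1-q}`. Altogether
`t^q μ{M*(h) > t} ≤ 2^q q / (q - 1) · c`, where `c` can be taken arbitrarily small for large `t`.
-/

open MeasureTheory Filter Topology
open scoped ENNReal NNReal

noncomputable section

/-- Birkhoff sums `S_N(h) = ∑_{j=0}^{N-1} h ∘ T^j`. -/
def partialSumT {Ω : Type*} (T : Ω → Ω) (h : Ω → ℝ) (n : ℕ) (ω : Ω) : ℝ :=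
  ∑ j ∈ Finset.range n, h (T^[j] ω)

/-- The maximal function `M*(h) = sup_{N ≥ 1} |S_N(h)|/N` (with values in `ℝ≥0∞`). -/
def maxFn {Ω : Type*} (T : Ω → Ω) (h : Ω → ℝ) (ω : Ω) : ℝ≥0∞ :=
  ⨆ N : ℕ, (‖partialSumT T h (N + 1) ω‖₊ : ℝ≥0∞) / (N + 1)

open Set

lemma partialSumT_eq_birkhoffSum {Ω : Type*} (T : Ω → Ω) (h : Ω → ℝ) :
    partialSumT T h = birkhoffSum T h :=
  rfl

def birkhoffMax {α : Type*} (T : α → α) (f : α → ℝ) : ℕ → α → ℝ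
  | 0 => fun _ => 0
  | n + 1 => fun x => max (birkhoffMax T f n x) (birkhoffSum T f (n + 1) x)

section birkhoffMax

variable {α : Type*} (T : α → α) (f : α → ℝ)

lemma birkhoffMax_nonneg (n : ℕ) (x : α) : 0 ≤ birkhoffMax T f n x := by
  induction n with
  | zero => exact le_rfl
  | succ n ih => exact ih.trans (le_max_left _ _)

lemma birkhoffMax_le_succ (n : ℕ) (x : α) : birkhoffMax T f n x ≤ birkhoffMax T f (n + 1) x :=
  le_max_left _ _

lemma birkhoffSum_le_birkhoffMax (n : ℕ) (x : α) :
    birkhoffSum T f n x ≤ birkhoffMax T f n x := by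
  cases n with
  | zero => exact (birkhoffSum_zero T f x).le
  | succ n => exact le_max_right _ _

lemma birkhoffMax_le_max_zero_add_comp (n : ℕ) (x : α) :
    birkhoffMax T f n x ≤ max 0 (f x + birkhoffMax T f n (T x)) := by
  induction n with
  | zero => exact le_max_left _ _
  | succ n ih =>
    refine max_le (ih.trans ?_) ?_
    · gcongr
      exact birkhoffMax_le_succ T f n (T x)
    · calc birkhoffSum T f (n + 1) x = f x + birkhoffSum T f n (T x) := birkhoffSum_succ' T f n x
        _ ≤ f x + birkhoffMax T f (n + 1) (T x) := by
          gcongr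
          exact (birkhoffSum_le_birkhoffMax T f n (T x)).trans (birkhoffMax_le_succ T f n (T x))
        _ ≤ _ := le_max_right _ _

end birkhoffMax

section MaximalErgodic

variable {Ω : Type*} [MeasurableSpace Ω] {μ : Measure Ω} {T : Ω → Ω} {f : Ω → ℝ}

lemma measurable_birkhoffSum (hT : Measurable T) (hf : Measurable f) (n : ℕ) :
    Measurable (birkhoffSum T f n) :=
  Finset.measurable_sum _ fun j _ => hf.comp (hT.iterate j)

lemma measurable_birkhoffMax (hT : Measurable T) (hf : Measurable f) (n : ℕ) :
    Measurable (birkhoffMax T f n) := by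
  induction n with
  | zero => exact measurable_const
  | succ n ih => exact ih.max (measurable_birkhoffSum hT hf (n + 1))

lemma integrable_birkhoffSum (hT : MeasurePreserving T μ μ) (hf : Integrable f μ) (n : ℕ) :
    Integrable (birkhoffSum T f n) μ :=
  integrable_finsetSum _ fun j _ => (hT.iterate j).integrable_comp_of_integrable hf

lemma integrable_birkhoffMax (hT : MeasurePreserving T μ μ) (hf : Integrable f μ) (n : ℕ) :
    Integrable (birkhoffMax T f n) μ := by
  induction n with
  | zero => exact integrable_zero Ω ℝ μ
  | succ n ih => exact ih.sup (integrable_birkhoffSum hT hf (n + 1))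

/-- Garsia's lemma: `M = birkhoffMax T f n` vanishes off `{M > 0}` and satisfies `M - M ∘ T ≤ f`
on it, so `∫_{M > 0} f ≥ ∫ M - ∫ M ∘ T = 0`. -/
theorem setIntegral_birkhoffMax_pos_nonneg (hT : MeasurePreserving T μ μ) (hf : Measurable f)
    (hfi : Integrable f μ) (n : ℕ) :
    0 ≤ ∫ x in {x | 0 < birkhoffMax T f n x}, f x ∂μ := by
  set M := birkhoffMax T f n
  set A := {x | 0 < M x}
  have hA : MeasurableSet A :=
    measurableSet_lt measurable_const (measurable_birkhoffMax hT.measurable hf n)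
  have hM : Integrable M μ := integrable_birkhoffMax hT hfi n
  have hMT : Integrable (fun x => M (T x)) μ := hT.integrable_comp_of_integrable hM
  have hM_on : ∫ x in A, M x ∂μ = ∫ x, M x ∂μ :=
    setIntegral_eq_integral_of_forall_compl_eq_zero fun x hx =>
      le_antisymm (not_lt.1 hx) (birkhoffMax_nonneg T f n x)
  have hMT_on : ∫ x in A, M (T x) ∂μ ≤ ∫ x, M x ∂μ := by
    have hinv : ∫ x, M (T x) ∂μ = ∫ x, M x ∂μ := by
      rw [← integral_map hT.aemeasurable (by rw [hT.map_eq]; exact hM.aestronglyMeasurable),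
        hT.map_eq]
    exact hinv ▸ setIntegral_le_integral hMT
      (Eventually.of_forall fun x => birkhoffMax_nonneg T f n (T x))
  have hdiff : ∫ x in A, (M x - M (T x)) ∂μ ≤ ∫ x in A, f x ∂μ := by
    refine setIntegral_mono_on (hM.sub hMT).integrableOn hfi.integrableOn hA fun x hx => ?_
    rcases le_max_iff.1 (birkhoffMax_le_max_zero_add_comp T f n x) with hle | hle
    · exact absurd hx (not_lt.2 hle)
    · linarith
  rw [integral_sub hM.integrableOn hMT.integrableOn] at hdiff
  linarith

lemma mul_measureReal_birkhoffMax_pos_le [IsFiniteMeasure μ] (hT : MeasurePreserving T μ μ)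
    (hf : Measurable f) (hfi : Integrable f μ) (hf0 : 0 ≤ f) (lam : ℝ) (n : ℕ) :
    lam * μ.real {x | 0 < birkhoffMax T (fun x => f x - lam) n x} ≤ ∫ x, f x ∂μ := by
  set A := {x | 0 < birkhoffMax T (fun x => f x - lam) n x}
  have hgarsia := setIntegral_birkhoffMax_pos_nonneg (f := fun x => f x - lam) hT
    (hf.sub measurable_const) (hfi.sub (integrable_const lam)) n
  rw [integral_sub hfi.integrableOn (integrableOn_const (measure_ne_top μ A)), setIntegral_const,
    smul_eq_mul] at hgarsia
  have := setIntegral_le_integral (s := A) hfi (Eventually.of_forall hf0)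
  linarith

theorem ofReal_mul_measure_birkhoffSum_gt_le [IsFiniteMeasure μ] (hT : MeasurePreserving T μ μ)
    (hf : Measurable f) (hf0 : 0 ≤ f) (lam : ℝ) :
    ENNReal.ofReal lam * μ {x | ∃ N : ℕ, lam * (N + 1) < birkhoffSum T f (N + 1) x} ≤
      ∫⁻ x, ENNReal.ofReal (f x) ∂μ := by
  by_cases hfi : Integrable f μ
  swap
  · rw [not_lt_top_iff.1 fun h => hfi ⟨hf.aestronglyMeasurable,
      (hasFiniteIntegral_iff_ofReal (Eventually.of_forall hf0)).2 h⟩]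
    exact le_top
  rw [← ofReal_integral_eq_lintegral_ofReal hfi (Eventually.of_forall hf0)]
  set A : ℕ → Set Ω := fun n => {x | 0 < birkhoffMax T (fun x => f x - lam) n x}
  have hA : Monotone A := monotone_nat_of_le_succ fun n x hx =>
    lt_of_lt_of_le hx (birkhoffMax_le_succ T _ n x)
  have hsub : {x | ∃ N : ℕ, lam * (N + 1) < birkhoffSum T f (N + 1) x} ⊆ ⋃ n, A n := by
    rintro x ⟨N, hN⟩
    refine mem_iUnion.2 ⟨N + 1, lt_of_lt_of_le ?_ (birkhoffSum_le_birkhoffMax T _ (N + 1) x)⟩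
    have hshift : birkhoffSum T (fun x => f x - lam) (N + 1) x =
        birkhoffSum T f (N + 1) x - lam * (N + 1) := by
      simp only [birkhoffSum, Finset.sum_sub_distrib, Finset.sum_const, Finset.card_range,
        nsmul_eq_mul]
      push_cast
      ring
    linarith
  calc ENNReal.ofReal lam * μ {x | ∃ N : ℕ, lam * (N + 1) < birkhoffSum T f (N + 1) x}
      ≤ ENNReal.ofReal lam * ⨆ n, μ (A n) := by
        rw [← hA.measure_iUnion]
        gcongr
    _ = ⨆ n, ENNReal.ofReal (lam * μ.real (A n)) := by
        simp only [ENNReal.mul_iSup, ENNReal.ofReal_mul' measureReal_nonneg,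
          ofReal_measureReal (measure_ne_top μ _)]
    _ ≤ _ := iSup_le fun n =>
        ENNReal.ofReal_le_ofReal (mul_measureReal_birkhoffMax_pos_le hT hf hfi hf0 lam n)

end MaximalErgodic

lemma lintegral_Ioi_ofReal_mul_max_rpow_neg {q s c : ℝ} (hq : 1 < q) (hs : 0 < s)
    (hc : 0 ≤ c) :
    ∫⁻ u in Ioi 0, ENNReal.ofReal (c * max s u ^ (-q)) =
      ENNReal.ofReal (q / (q - 1) * c * s ^ (1 - q)) := by
  have hflat : ∫⁻ u in Ioc 0 s, ENNReal.ofReal (c * max s u ^ (-q)) =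
      ENNReal.ofReal (c * s ^ (1 - q)) := by
    rw [setLIntegral_congr_fun measurableSet_Ioc fun u hu => by rw [max_eq_left hu.2],
      setLIntegral_const, Real.volume_Ioc, sub_zero, ← ENNReal.ofReal_mul (by positivity),
      Real.rpow_sub hs, Real.rpow_one, Real.rpow_neg hs.le]
    ring_nf
  have hdecay : ∫⁻ u in Ioi s, ENNReal.ofReal (c * max s u ^ (-q)) =
      ENNReal.ofReal (c * s ^ (1 - q) / (q - 1)) := by
    rw [setLIntegral_congr_fun measurableSet_Ioi fun u hu => by rw [max_eq_right hu.le],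
      ← ofReal_integral_eq_lintegral_ofReal
        ((integrableOn_Ioi_rpow_of_lt (by linarith) hs).const_mul c)
        (ae_restrict_of_forall_mem measurableSet_Ioi fun u hu =>
          mul_nonneg hc (Real.rpow_nonneg (hs.trans hu).le _)),
      integral_const_mul, integral_Ioi_rpow_of_lt (by linarith) hs]
    congr 1
    rw [show -q + 1 = 1 - q by ring, show 1 - q = -(q - 1) by ring]
    field_simp
  rw [← Ioc_union_Ioi_eq_Ioi hs.le, lintegral_union measurableSet_Ioi (Ioc_disjoint_Ioi le_rfl),
    hflat, hdecay, ← ENNReal.ofReal_add (by positivity) (by have := sub_pos.2 hq; positivity)]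
  have hq1 : q - 1 ≠ 0 := by linarith
  congr 1
  field_simp
  ring

section Tail

variable {Ω : Type*}

def absTail (h : Ω → ℝ) (s : ℝ) : Ω → ℝ := {x | s < |h x|}.indicator fun x => |h x|

lemma absTail_nonneg (h : Ω → ℝ) (s : ℝ) : 0 ≤ absTail h s :=
  indicator_nonneg fun x _ => abs_nonneg (h x)

lemma abs_le_add_absTail (h : Ω → ℝ) {s : ℝ} (hs : 0 ≤ s) (x : Ω) :
    |h x| ≤ s + absTail h s x := by
  by_cases hx : s < |h x|
  · simp only [absTail, indicator_of_mem (show x ∈ {x | s < |h x|} from hx)]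
    linarith
  · simp only [absTail, indicator_of_notMem (show x ∉ {x | s < |h x|} from hx)]
    linarith [not_lt.1 hx]

variable [MeasurableSpace Ω] {μ : Measure Ω}

lemma measurable_absTail {h : Ω → ℝ} (hh : Measurable h) (s : ℝ) :
    Measurable (absTail h s) :=
  hh.abs.indicator (measurableSet_lt measurable_const hh.abs)

lemma lintegral_absTail_le {h : Ω → ℝ} (hh : Measurable h) {q s c : ℝ} (hq : 1 < q)
    (hs : 0 < s) (hc : 0 ≤ c)
    (hweak : ∀ u, s ≤ u → ENNReal.ofReal (u ^ q) * μ {x | u < |h x|} ≤ ENNReal.ofReal c) :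
    ∫⁻ x, ENNReal.ofReal (absTail h s x) ∂μ ≤
      ENNReal.ofReal (q / (q - 1) * c * s ^ (1 - q)) := by
  have hdist : ∀ u ∈ Ioi (0 : ℝ), μ {x | u < absTail h s x} ≤
      ENNReal.ofReal (c * max s u ^ (-q)) := by
    intro u hu
    have hpos : 0 < max s u ^ q := Real.rpow_pos_of_pos (hs.trans_le (le_max_left s u)) q
    have hsub : {x | u < absTail h s x} ⊆ {x | max s u < |h x|} := by
      intro x hx
      replace hx : u < absTail h s x := hx
      by_cases hxs : s < |h x|
      · simp only [absTail, indicator_of_mem (show x ∈ {x | s < |h x|} from hxs)] at hx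
        exact max_lt hxs hx
      · simp only [absTail, indicator_of_notMem (show x ∉ {x | s < |h x|} from hxs)] at hx
        exact absurd hu (not_lt.2 hx.le)
    refine (measure_mono hsub).trans ?_
    rw [Real.rpow_neg (hs.le.trans (le_max_left s u)), ← div_eq_mul_inv,
      ENNReal.ofReal_div_of_pos hpos, ENNReal.le_div_iff_mul_le
      (Or.inl (ENNReal.ofReal_pos.2 hpos).ne') (Or.inl ENNReal.ofReal_ne_top), mul_comm]
    exact hweak _ (le_max_left s u)
  calc ∫⁻ x, ENNReal.ofReal (absTail h s x) ∂μ
      = ∫⁻ u in Ioi 0, μ {x | u < absTail h s x} :=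
        lintegral_eq_lintegral_meas_lt μ (Eventually.of_forall (absTail_nonneg h s))
          (measurable_absTail hh s).aemeasurable
    _ ≤ ∫⁻ u in Ioi 0, ENNReal.ofReal (c * max s u ^ (-q)) :=
        setLIntegral_mono (by fun_prop) hdist
    _ = _ := lintegral_Ioi_ofReal_mul_max_rpow_neg hq hs hc

end Tail

section MaximalFunction

variable {Ω : Type*} {T : Ω → Ω} {h : Ω → ℝ}

lemma exists_lt_abs_birkhoffSum_of_lt_maxFn {t : ℝ} (ht : 0 ≤ t) {x : Ω}
    (hx : ENNReal.ofReal t < maxFn T h x) :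
    ∃ N : ℕ, t * (N + 1) < |birkhoffSum T h (N + 1) x| := by
  obtain ⟨N, hN⟩ := lt_iSup_iff.1 hx
  refine ⟨N, ?_⟩
  have hnorm : (‖partialSumT T h (N + 1) x‖₊ : ℝ≥0∞) =
      ENNReal.ofReal |birkhoffSum T h (N + 1) x| := by
    rw [partialSumT_eq_birkhoffSum, ← Real.norm_eq_abs, ofReal_norm, enorm_eq_nnnorm]
  rw [ENNReal.lt_div_iff_mul_lt (Or.inl (by simp)) (Or.inl (by simp)), hnorm,
    ← ENNReal.ofReal_natCast, ← ENNReal.ofReal_one,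
    ← ENNReal.ofReal_add (by positivity) zero_le_one, ← ENNReal.ofReal_mul ht] at hN
  exact (ENNReal.ofReal_lt_ofReal_iff_of_nonneg (by positivity)).1 hN

lemma setOf_lt_maxFn_subset {s : ℝ} (hs : 0 ≤ s) :
    {x | ENNReal.ofReal (2 * s) < maxFn T h x} ⊆
      {x | ∃ N : ℕ, s * (N + 1) < birkhoffSum T (absTail h s) (N + 1) x} := by
  intro x hx
  obtain ⟨N, hN⟩ := exists_lt_abs_birkhoffSum_of_lt_maxFn (by positivity) hx
  refine ⟨N, ?_⟩
  have hdom :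
      |birkhoffSum T h (N + 1) x| ≤ s * (N + 1) + birkhoffSum T (absTail h s) (N + 1) x :=
    calc |birkhoffSum T h (N + 1) x|
        ≤ ∑ j ∈ Finset.range (N + 1), |h (T^[j] x)| := Finset.abs_sum_le_sum_abs _ _
      _ ≤ ∑ j ∈ Finset.range (N + 1), (s + absTail h s (T^[j] x)) :=
          Finset.sum_le_sum fun j _ => abs_le_add_absTail h hs _
      _ = s * (N + 1) + birkhoffSum T (absTail h s) (N + 1) x := by
          rw [Finset.sum_add_distrib, Finset.sum_const, Finset.card_range, nsmul_eq_mul,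
            mul_comm]
          push_cast
          rfl
  linarith

theorem ofReal_rpow_mul_measure_lt_maxFn_le [MeasurableSpace Ω] {μ : Measure Ω}
    [IsFiniteMeasure μ] (hT : MeasurePreserving T μ μ) (hh : Measurable h) {q s c : ℝ}
    (hq : 1 < q) (hs : 0 < s) (hc : 0 ≤ c)
    (hweak : ∀ u, s ≤ u → ENNReal.ofReal (u ^ q) * μ {x | u < |h x|} ≤ ENNReal.ofReal c) :
    ENNReal.ofReal ((2 * s) ^ q) * μ {x | ENNReal.ofReal (2 * s) < maxFn T h x} ≤
      ENNReal.ofReal (2 ^ q * (q / (q - 1)) * c) := by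
  have hr : 0 ≤ (2 * s) ^ q / s := by positivity
  calc ENNReal.ofReal ((2 * s) ^ q) * μ {x | ENNReal.ofReal (2 * s) < maxFn T h x}
      ≤ ENNReal.ofReal ((2 * s) ^ q / s * s) *
          μ {x | ∃ N : ℕ, s * (N + 1) < birkhoffSum T (absTail h s) (N + 1) x} := by
        rw [div_mul_cancel₀ _ hs.ne']
        exact mul_le_mul_right (measure_mono (setOf_lt_maxFn_subset hs.le)) _
    _ ≤ ENNReal.ofReal ((2 * s) ^ q / s) * ∫⁻ x, ENNReal.ofReal (absTail h s x) ∂μ := by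
        rw [ENNReal.ofReal_mul hr, mul_assoc]
        exact mul_le_mul_right (ofReal_mul_measure_birkhoffSum_gt_le hT
          (measurable_absTail hh s) (absTail_nonneg h s) s) _
    _ ≤ ENNReal.ofReal ((2 * s) ^ q / s) * ENNReal.ofReal (q / (q - 1) * c * s ^ (1 - q)) :=
        mul_le_mul_right (lintegral_absTail_le hh hq hs hc hweak) _
    _ = ENNReal.ofReal (2 ^ q * (q / (q - 1)) * c) := by
        rw [← ENNReal.ofReal_mul hr, Real.mul_rpow zero_le_two hs.le, Real.rpow_sub hs,
          Real.rpow_one]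
        have := (Real.rpow_pos_of_pos hs q).ne'
        congr 1
        field_simp

end MaximalFunction

/-- **Lemma 3.1 (i)**: if `h ∈ 𝕃₀^{q,∞}` then `M*(h) ∈ 𝕃₀^{q,∞}`. -/
theorem stmt10 {Ω : Type*} [MeasurableSpace Ω] (μ : Measure Ω) [IsProbabilityMeasure μ]
    (T : Ω ≃ᵐ Ω) (hT : MeasurePreserving (⇑T) μ μ)
    (q : ℝ) (hq : 1 < q)
    (h : Ω → ℝ) (hmeas : Measurable h)
    (hweak : Tendsto (fun t : ℝ => ENNReal.ofReal (t ^ q) * μ {ω | t < |h ω|})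
      atTop (𝓝 0)) :
    Tendsto (fun t : ℝ =>
        ENNReal.ofReal (t ^ q) * μ {ω | ENNReal.ofReal t < maxFn (⇑T) h ω})
      atTop (𝓝 0) := by
  set K : ℝ := 2 ^ q * (q / (q - 1))
  have hK : 0 < K := by have := sub_pos.2 hq; positivity
  rw [ENNReal.tendsto_nhds_zero]
  intro ε hε
  obtain ⟨r, -, hr, hrε⟩ := ENNReal.lt_iff_exists_real_btwn.1 hε
  have hc : 0 < r / K := div_pos (ENNReal.ofReal_pos.1 hr) hK
  obtain ⟨a, ha⟩ := eventually_atTop.1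
    (ENNReal.tendsto_nhds_zero.1 hweak _ (ENNReal.ofReal_pos.2 hc))
  filter_upwards [eventually_gt_atTop 0, eventually_ge_atTop (2 * a)] with t ht hta
  have hbound := ofReal_rpow_mul_measure_lt_maxFn_le hT hmeas hq (half_pos ht) hc.le
    fun u hu => ha u (by linarith)
  rw [mul_div_cancel₀ t two_ne_zero, mul_div_cancel₀ r hK.ne'] at hbound
  exact hbound.trans hrε.le
end
end

section
/- Let q > 1 and let h : Ω → ℝ be integrable. Then for every t > 0, t · (μ{M*(h) ≥ t})^{1/q} ≤ (q/(q−1)) · ‖h · 1_{A_t}‖_{q,∞}, where A_t := {M*(h) ≥ t} and ‖h·1_{A_t}‖_{q,∞} := sup_{s>0} s · (μ({|h| > s} ∩ A_t))^{1/q}. -/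
/-!
Garsia's proof of Hopf's maximal ergodic lemma, applied to `h - t` and to `-h - t`, gives
`t · μ{M*(h) > t} ≤ ∫_{M*(h) > t} |h|`; letting the threshold increase to `t` yields the
Wiener-type inequality `t · μ(A_t) ≤ ∫_{A_t} |h|`. By the layer-cake formula, bounding the
distribution function of `|h|` on `A_t` by `μ(A_t)` below `s₀ = (1 - 1/q) t` and by
`(‖h 1_{A_t}‖_{q,∞} / s)^q` above it, the right-hand side is at most
`μ(A_t) s₀ + ‖h 1_{A_t}‖_{q,∞}^q s₀^{1-q} / (q - 1)`, and rearranging gives the claim.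
-/

open MeasureTheory Filter Topology
open scoped ENNReal NNReal

noncomputable section

section Birkhoff

variable {Ω : Type*} {T : Ω → Ω} {f : Ω → ℝ}

@[simp]
lemma partialSumT_zero (T : Ω → Ω) (f : Ω → ℝ) (ω : Ω) : partialSumT T f 0 ω = 0 := by
  simp [partialSumT]

lemma partialSumT_succ (T : Ω → Ω) (f : Ω → ℝ) (n : ℕ) (ω : Ω) :
    partialSumT T f (n + 1) ω = f ω + partialSumT T f n (T ω) := by
  simp only [partialSumT, Finset.sum_range_succ', Function.iterate_succ_apply,
    Function.iterate_zero_apply]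
  ring

lemma partialSumT_sub_const (T : Ω → Ω) (f : Ω → ℝ) (c : ℝ) (n : ℕ) (ω : Ω) :
    partialSumT T (fun ω ↦ f ω - c) n ω = partialSumT T f n ω - n * c := by
  simp [partialSumT, Finset.sum_sub_distrib]

lemma partialSumT_neg (T : Ω → Ω) (f : Ω → ℝ) (n : ℕ) (ω : Ω) :
    partialSumT T (-f) n ω = -partialSumT T f n ω := by
  simp [partialSumT]

variable [MeasurableSpace Ω] {μ : Measure Ω}

lemma measurable_partialSumT (hT : Measurable T) (hf : Measurable f) (n : ℕ) :
    Measurable (partialSumT T f n) :=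
  Finset.measurable_sum _ fun j _ ↦ hf.comp (hT.iterate j)

lemma integrable_partialSumT (hT : MeasurePreserving T μ μ) (hf : Integrable f μ) (n : ℕ) :
    Integrable (partialSumT T f n) μ :=
  integrable_finsetSum _ fun j _ ↦
    ((hT.iterate j).integrable_comp hf.aestronglyMeasurable).mpr hf

end Birkhoff

def runningMaxT {Ω : Type*} (T : Ω → Ω) (f : Ω → ℝ) (N : ℕ) (ω : Ω) : ℝ :=
  (Finset.range (N + 1)).sup' Finset.nonempty_range_add_one fun n ↦ partialSumT T f n ω

section Hopf

variable {Ω : Type*} {T : Ω → Ω} {f : Ω → ℝ}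

lemma partialSumT_le_runningMaxT {n N : ℕ} (hn : n ≤ N) (ω : Ω) :
    partialSumT T f n ω ≤ runningMaxT T f N ω :=
  Finset.le_sup' (fun n ↦ partialSumT T f n ω) (Finset.mem_range_succ_iff.mpr hn)

lemma runningMaxT_nonneg (N : ℕ) (ω : Ω) : 0 ≤ runningMaxT T f N ω := by
  simpa using partialSumT_le_runningMaxT (T := T) (f := f) N.zero_le ω

lemma zero_lt_runningMaxT_iff {N : ℕ} {ω : Ω} :
    0 < runningMaxT T f N ω ↔ ∃ n ≤ N, 0 < partialSumT T f n ω := by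
  simp [runningMaxT, Finset.lt_sup'_iff]

/-- Garsia's inequality: where `M_N > 0` the maximum is some `S_{m+1} = f + S_m ∘ T`. -/
lemma runningMaxT_sub_comp_le_indicator (N : ℕ) (ω : Ω) :
    runningMaxT T f N ω - runningMaxT T f N (T ω) ≤
      {ω | 0 < runningMaxT T f N ω}.indicator f ω := by
  by_cases hpos : ω ∈ {ω | 0 < runningMaxT T f N ω}
  · rw [Set.indicator_of_mem hpos]
    obtain ⟨n, hn, hmax⟩ := Finset.exists_mem_eq_sup' Finset.nonempty_range_add_one
      fun n ↦ partialSumT T f n ω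
    change runningMaxT T f N ω = _ at hmax
    obtain _ | m := n
    · simp [hmax] at hpos
    have hm : m ≤ N := by rw [Finset.mem_range] at hn; omega
    have := partialSumT_le_runningMaxT (T := T) (f := f) hm (T ω)
    rw [hmax, partialSumT_succ]
    linarith
  · rw [Set.indicator_of_notMem hpos]
    linarith [not_lt.mp (Set.notMem_ofPred_iff.mp hpos),
      runningMaxT_nonneg (T := T) (f := f) N (T ω)]

variable [MeasurableSpace Ω] {μ : Measure Ω}

lemma measurable_runningMaxT (hT : Measurable T) (hf : Measurable f) (N : ℕ) :
    Measurable (runningMaxT T f N) :=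
  Finset.measurable_range_sup'' fun n _ ↦ measurable_partialSumT hT hf n

lemma integrable_runningMaxT (hT : MeasurePreserving T μ μ) (hf : Integrable f μ) (N : ℕ) :
    Integrable (runningMaxT T f N) μ := by
  have : runningMaxT T f N =
      (Finset.range (N + 1)).sup' Finset.nonempty_range_add_one (partialSumT T f) := by
    ext ω; simp [runningMaxT]
  rw [this]
  exact Finset.sup'_induction (p := fun g ↦ Integrable g μ) _ _ (fun _ hg _ hk ↦ hg.sup hk)
    fun n _ ↦ integrable_partialSumT hT hf n

/-- `M_N` and `M_N ∘ T` have the same integral, so Garsia's inequality integrates to this. -/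
lemma setIntegral_runningMaxT_pos_nonneg (hT : MeasurePreserving T μ μ) (hf : Integrable f μ)
    (hfm : Measurable f) (N : ℕ) :
    0 ≤ ∫ ω in {ω | 0 < runningMaxT T f N ω}, f ω ∂μ := by
  have hMm := measurable_runningMaxT hT.measurable hfm N
  have hE : MeasurableSet {ω | 0 < runningMaxT T f N ω} := measurableSet_lt measurable_const hMm
  have hM := integrable_runningMaxT hT hf N
  have hMT : Integrable (fun ω ↦ runningMaxT T f N (T ω)) μ :=
    (hT.integrable_comp hM.aestronglyMeasurable).mpr hM
  have hcomp : ∫ ω, runningMaxT T f N (T ω) ∂μ = ∫ ω, runningMaxT T f N ω ∂μ := by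
    rw [← integral_map_of_stronglyMeasurable hT.measurable hMm.stronglyMeasurable, hT.map_eq]
  rw [← integral_indicator hE]
  calc (0 : ℝ) = ∫ ω, (runningMaxT T f N ω - runningMaxT T f N (T ω)) ∂μ := by
        rw [integral_sub hM hMT, hcomp, sub_self]
    _ ≤ _ := integral_mono (hM.sub hMT) (hf.indicator hE) (runningMaxT_sub_comp_le_indicator N)

/-- Hopf's maximal ergodic lemma. -/
theorem setIntegral_exists_partialSumT_pos_nonneg (hT : MeasurePreserving T μ μ)
    (hf : Integrable f μ) (hfm : Measurable f) :
    0 ≤ ∫ ω in {ω | ∃ n, 0 < partialSumT T f n ω}, f ω ∂μ := by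
  have hunion : {ω | ∃ n, 0 < partialSumT T f n ω} = ⋃ N, {ω | 0 < runningMaxT T f N ω} := by
    ext ω
    simp only [Set.mem_ofPred_eq, Set.mem_iUnion, zero_lt_runningMaxT_iff]
    exact ⟨fun ⟨n, hn⟩ ↦ ⟨n, n, le_rfl, hn⟩, fun ⟨_, n, _, hn⟩ ↦ ⟨n, hn⟩⟩
  have hmono : Monotone fun N ↦ {ω | 0 < runningMaxT T f N ω} := by
    intro N N' hNN' ω hω
    simp only [Set.mem_ofPred_eq, zero_lt_runningMaxT_iff] at hω ⊢
    obtain ⟨n, hn, hpos⟩ := hω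
    exact ⟨n, hn.trans hNN', hpos⟩
  rw [hunion]
  exact ge_of_tendsto
    (tendsto_setIntegral_of_monotone
      (fun N ↦ measurableSet_lt measurable_const (measurable_runningMaxT hT.measurable hfm N))
      hmono hf.integrableOn)
    (Eventually.of_forall (setIntegral_runningMaxT_pos_nonneg hT hf hfm))

lemma mul_measureReal_le_setIntegral [IsFiniteMeasure μ] (hT : MeasurePreserving T μ μ)
    (hf : Integrable f μ) (hfm : Measurable f) (t : ℝ) :
    t * μ.real {ω | ∃ n : ℕ, n * t < partialSumT T f n ω} ≤
      ∫ ω in {ω | ∃ n : ℕ, n * t < partialSumT T f n ω}, f ω ∂μ := by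
  have hopf := setIntegral_exists_partialSumT_pos_nonneg (f := fun ω ↦ f ω - t) hT
    (hf.sub (integrable_const t)) (hfm.sub measurable_const)
  simp only [partialSumT_sub_const, sub_pos] at hopf
  rw [integral_sub hf.integrableOn (integrable_const t).integrableOn, setIntegral_const,
    smul_eq_mul] at hopf
  linarith

end Hopf

section Wiener

variable {Ω : Type*} {T : Ω → Ω} {h : Ω → ℝ}

lemma ofReal_lt_maxFn_iff {t : ℝ} (ht : 0 ≤ t) (ω : Ω) :
    ENNReal.ofReal t < maxFn T h ω ↔
      (∃ n : ℕ, n * t < partialSumT T h n ω) ∨ ∃ n : ℕ, n * t < partialSumT T (-h) n ω := by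
  have hterm (n : ℕ) : ENNReal.ofReal t < (‖partialSumT T h (n + 1) ω‖₊ : ℝ≥0∞) / (n + 1) ↔
      (n + 1 : ℕ) * t < |partialSumT T h (n + 1) ω| := by
    rw [ENNReal.lt_div_iff_mul_lt (by simp) (by simp), ← Nat.cast_succ, ← ENNReal.ofReal_natCast,
      ← ENNReal.ofReal_mul ht, ← enorm_eq_nnnorm, Real.enorm_eq_ofReal_abs,
      ENNReal.ofReal_lt_ofReal_iff_of_nonneg (by positivity), mul_comm]
  simp only [maxFn, lt_iSup_iff, hterm, lt_abs, partialSumT_neg]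
  constructor
  · rintro ⟨n, hn | hn⟩
    exacts [.inl ⟨n + 1, hn⟩, .inr ⟨n + 1, hn⟩]
  · rintro (⟨_ | n, hn⟩ | ⟨_ | n, hn⟩)
    · simp at hn
    · exact ⟨n, .inl hn⟩
    · simp at hn
    · exact ⟨n, .inr hn⟩

lemma indicator_add_indicator_neg_le_indicator_abs (P N : Set Ω) (ω : Ω) :
    P.indicator h ω + N.indicator (-h) ω ≤ (P ∪ N).indicator (fun ω ↦ |h ω|) ω := by
  by_cases hP : ω ∈ P <;> by_cases hN : ω ∈ N <;>
    simp [hP, hN, abs_nonneg, le_abs_self, neg_le_abs]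

variable [MeasurableSpace Ω] {μ : Measure Ω}

lemma measurable_maxFn (hT : Measurable T) (hh : Measurable h) : Measurable (maxFn T h) :=
  Measurable.iSup fun N ↦
    ((measurable_partialSumT hT hh (N + 1)).nnnorm.coe_nnreal_ennreal).div_const _

lemma measurableSet_exists_mul_lt_partialSumT (hT : Measurable T) (hh : Measurable h) (t : ℝ) :
    MeasurableSet {ω | ∃ n : ℕ, n * t < partialSumT T h n ω} := by
  simp only [Set.ofPred_exists]
  exact .iUnion fun n ↦ measurableSet_lt measurable_const (measurable_partialSumT hT hh n)

lemma mul_measureReal_ofReal_lt_maxFn_le [IsFiniteMeasure μ] (hT : MeasurePreserving T μ μ)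
    (hh : Integrable h μ) (hhm : Measurable h) {t : ℝ} (ht : 0 ≤ t) :
    t * μ.real {ω | ENNReal.ofReal t < maxFn T h ω} ≤
      ∫ ω in {ω | ENNReal.ofReal t < maxFn T h ω}, |h ω| ∂μ := by
  set P := {ω | ∃ n : ℕ, n * t < partialSumT T h n ω}
  set N := {ω | ∃ n : ℕ, n * t < partialSumT T (-h) n ω}
  have hPm : MeasurableSet P := measurableSet_exists_mul_lt_partialSumT hT.measurable hhm t
  have hNm : MeasurableSet N := measurableSet_exists_mul_lt_partialSumT hT.measurable hhm.neg t
  have hunion : {ω | ENNReal.ofReal t < maxFn T h ω} = P ∪ N := by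
    ext ω; exact ofReal_lt_maxFn_iff ht ω
  rw [hunion]
  calc t * μ.real (P ∪ N) ≤ t * μ.real P + t * μ.real N := by
        rw [← mul_add]; exact mul_le_mul_of_nonneg_left (measureReal_union_le P N) ht
    _ ≤ ∫ ω in P, h ω ∂μ + ∫ ω in N, (-h) ω ∂μ :=
        add_le_add (mul_measureReal_le_setIntegral hT hh hhm t)
          (mul_measureReal_le_setIntegral hT hh.neg hhm.neg t)
    _ ≤ ∫ ω in P ∪ N, |h ω| ∂μ := by
        rw [← integral_indicator hPm, ← integral_indicator hNm,
          ← integral_indicator (hPm.union hNm), ← integral_add (hh.indicator hPm)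
          (hh.neg.indicator hNm)]
        exact integral_mono ((hh.indicator hPm).add (hh.neg.indicator hNm))
          (hh.abs.indicator (hPm.union hNm)) (indicator_add_indicator_neg_le_indicator_abs P N)

lemma mul_measureReal_ofReal_le_maxFn_le [IsFiniteMeasure μ] (hT : MeasurePreserving T μ μ)
    (hh : Integrable h μ) (hhm : Measurable h) {t : ℝ} (ht : 0 < t) :
    t * μ.real {ω | ENNReal.ofReal t ≤ maxFn T h ω} ≤
      ∫ ω in {ω | ENNReal.ofReal t ≤ maxFn T h ω}, |h ω| ∂μ := by
  obtain ⟨u, hu_mono, hu_mem, hu_lim⟩ := exists_seq_strictMono_tendsto' ht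
  set S : ℕ → Set Ω := fun k ↦ {ω | ENNReal.ofReal (u k) < maxFn T h ω}
  have hSm (k : ℕ) : MeasurableSet (S k) :=
    measurableSet_lt measurable_const (measurable_maxFn hT.measurable hhm)
  have hS_anti : Antitone S := fun k l hkl ω hω ↦
    (ENNReal.ofReal_le_ofReal (hu_mono.monotone hkl)).trans_lt hω
  have hS_inter : ⋂ k, S k = {ω | ENNReal.ofReal t ≤ maxFn T h ω} := by
    ext ω
    simp only [S, Set.mem_iInter, Set.mem_ofPred_eq]
    refine ⟨fun hω ↦ le_of_forall_lt fun r hr ↦ ?_, fun hω k ↦ ?_⟩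
    · obtain ⟨k, hk⟩ := (((ENNReal.continuous_ofReal.tendsto t).comp hu_lim).eventually
        (eventually_gt_nhds hr)).exists
      exact hk.trans (hω k)
    · exact ((ENNReal.ofReal_lt_ofReal_iff ht).mpr (hu_mem k).2).trans_le hω
  have hmeas_lim : Tendsto (fun k ↦ μ.real (S k)) atTop
      (𝓝 (μ.real {ω | ENNReal.ofReal t ≤ maxFn T h ω})) := by
    rw [← hS_inter]
    exact (ENNReal.tendsto_toReal (measure_ne_top _ _)).comp
      (tendsto_measure_iInter_atTop (fun k ↦ (hSm k).nullMeasurableSet) hS_anti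
        ⟨0, measure_ne_top _ _⟩)
  have hint_lim : Tendsto (fun k ↦ ∫ ω in S k, |h ω| ∂μ) atTop
      (𝓝 (∫ ω in {ω | ENNReal.ofReal t ≤ maxFn T h ω}, |h ω| ∂μ)) := by
    rw [← hS_inter]
    exact tendsto_setIntegral_of_antitone hSm hS_anti ⟨0, hh.abs.integrableOn⟩
  exact le_of_tendsto_of_tendsto' (hu_lim.mul hmeas_lim) hint_lim
    fun k ↦ mul_measureReal_ofReal_lt_maxFn_le hT hh hhm (hu_mem k).1.le

end Wiener

section WeakType

lemma mul_rpow_one_div_le_of_le_layerCake {t q a c : ℝ} (ht : 0 < t) (hq : 1 < q) (ha : 0 ≤ a)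
    (hc : 0 ≤ c)
    (h : t * a ≤ a * ((q - 1) / q * t) + c ^ q * ((q - 1) / q * t) ^ (1 - q) / (q - 1)) :
    t * a ^ (1 / q) ≤ q / (q - 1) * c := by
  have hq0 : 0 < q := by linarith
  have hq1 : 0 < q - 1 := by linarith
  set s₀ := (q - 1) / q * t with hs₀_def
  have hs₀ : 0 < s₀ := by positivity
  have hsplit : s₀ ^ (1 - q) = s₀ * s₀ ^ (-q) := by
    rw [sub_eq_add_neg, Real.rpow_add hs₀, Real.rpow_one]
  have ha_le : a ≤ (c / s₀) ^ q := by
    rw [Real.div_rpow hc hs₀.le, div_eq_mul_inv, ← Real.rpow_neg hs₀.le]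
    have hlhs : t * a - a * s₀ = a * (t / q) := by rw [hs₀_def]; field_simp; ring
    have hrhs : c ^ q * s₀ ^ (1 - q) / (q - 1) = c ^ q * s₀ ^ (-q) * (t / q) := by
      rw [hsplit, hs₀_def]; field_simp
    exact le_of_mul_le_mul_right (by linarith) (by positivity : 0 < t / q)
  calc t * a ^ (1 / q) ≤ t * (c / s₀) := by
        gcongr
        calc a ^ (1 / q) ≤ ((c / s₀) ^ q) ^ (1 / q) := by gcongr
          _ = c / s₀ := by rw [one_div, Real.rpow_rpow_inv (by positivity) hq0.ne']
    _ = q / (q - 1) * c := by rw [hs₀_def]; field_simp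

variable {α : Type*} [MeasurableSpace α] {ν : Measure α}

lemma meas_le_of_ofReal_mul_rpow_le {m : ℝ≥0∞} {s c q : ℝ} (hs : 0 < s) (hc : 0 ≤ c)
    (hq : 0 < q) (h : ENNReal.ofReal s * m ^ (1 / q) ≤ ENNReal.ofReal c) :
    m ≤ ENNReal.ofReal (c ^ q * s ^ (-q)) := by
  have hroot : m ^ (1 / q) ≤ ENNReal.ofReal (c / s) := by
    rw [ENNReal.ofReal_div_of_pos hs, ENNReal.le_div_iff_mul_le (by simp [hs]) (by simp),
      mul_comm]
    exact h
  calc m = (m ^ (1 / q)) ^ q := by rw [← ENNReal.rpow_mul, one_div_mul_cancel hq.ne',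
        ENNReal.rpow_one]
    _ ≤ ENNReal.ofReal (c / s) ^ q := by gcongr
    _ = ENNReal.ofReal (c ^ q * s ^ (-q)) := by
        rw [ENNReal.ofReal_rpow_of_nonneg (by positivity) hq.le, Real.div_rpow hc hs.le,
          Real.rpow_neg hs.le, div_eq_mul_inv]

lemma lintegral_le_of_meas_lt_le_mul_rpow_neg {g : α → ℝ} (hg0 : 0 ≤ g) (hg : AEMeasurable g ν)
    {q C s₀ : ℝ} (hq : 1 < q) (hC : 0 ≤ C) (hs₀ : 0 < s₀)
    (hdist : ∀ s, 0 < s → ν {x | s < g x} ≤ ENNReal.ofReal (C * s ^ (-q))) :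
    ∫⁻ x, ENNReal.ofReal (g x) ∂ν ≤
      ν Set.univ * ENNReal.ofReal s₀ + ENNReal.ofReal (C * s₀ ^ (1 - q) / (q - 1)) := by
  have htail_int : IntegrableOn (fun s ↦ C * s ^ (-q)) (Set.Ioi s₀) :=
    (integrableOn_Ioi_rpow_of_lt (by linarith) hs₀).const_mul C
  have htail_nonneg : 0 ≤ᵐ[volume.restrict (Set.Ioi s₀)] fun s ↦ C * s ^ (-q) :=
    (ae_restrict_iff' measurableSet_Ioi).mpr
      (ae_of_all _ fun s hs ↦ mul_nonneg hC (Real.rpow_nonneg (hs₀.trans hs).le _))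
  rw [lintegral_eq_lintegral_meas_lt ν (ae_of_all _ hg0) hg, ← Set.Ioc_union_Ioi_eq_Ioi hs₀.le,
    lintegral_union measurableSet_Ioi (Set.Ioc_disjoint_Ioi le_rfl)]
  gcongr
  · calc ∫⁻ s in Set.Ioc 0 s₀, ν {x | s < g x} ≤ ∫⁻ _ in Set.Ioc 0 s₀, ν Set.univ :=
          lintegral_mono fun s ↦ measure_mono (Set.subset_univ _)
      _ = ν Set.univ * ENNReal.ofReal s₀ := by simp [Real.volume_Ioc]
  · calc ∫⁻ s in Set.Ioi s₀, ν {x | s < g x} ≤ ∫⁻ s in Set.Ioi s₀, ENNReal.ofReal (C * s ^ (-q)) :=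
          setLIntegral_mono' measurableSet_Ioi fun s hs ↦ hdist s (hs₀.trans hs)
      _ = ENNReal.ofReal (∫ s in Set.Ioi s₀, C * s ^ (-q)) :=
          (ofReal_integral_eq_lintegral_ofReal htail_int htail_nonneg).symm
      _ = ENNReal.ofReal (C * s₀ ^ (1 - q) / (q - 1)) := by
          rw [integral_const_mul, integral_Ioi_rpow_of_lt (by linarith) hs₀,
            show -q + 1 = 1 - q by ring, neg_div, ← div_neg, neg_sub, mul_div_assoc]

lemma ofReal_mul_rpow_le_of_le_lintegral [IsFiniteMeasure ν] {g : α → ℝ} (hg0 : 0 ≤ g)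
    (hg : AEMeasurable g ν) {q t : ℝ} (hq : 1 < q) (ht : 0 < t)
    (hmean : ENNReal.ofReal t * ν Set.univ ≤ ∫⁻ x, ENNReal.ofReal (g x) ∂ν) :
    ENNReal.ofReal t * ν Set.univ ^ (1 / q) ≤
      ENNReal.ofReal (q / (q - 1)) *
        ⨆ (s : ℝ) (_ : 0 < s), ENNReal.ofReal s * ν {x | s < g x} ^ (1 / q) := by
  have hq1 : 0 < q - 1 := by linarith
  set c := ⨆ (s : ℝ) (_ : 0 < s), ENNReal.ofReal s * ν {x | s < g x} ^ (1 / q)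
  by_cases hc : c = ⊤
  · rw [hc, ENNReal.mul_top (by simp; positivity)]
    exact le_top
  have hdist (s : ℝ) (hs : 0 < s) : ν {x | s < g x} ≤ ENNReal.ofReal (c.toReal ^ q * s ^ (-q)) :=
    meas_le_of_ofReal_mul_rpow_le hs ENNReal.toReal_nonneg (by linarith) <| by
      rw [ENNReal.ofReal_toReal hc]
      exact le_iSup₂ (f := fun (s : ℝ) (_ : 0 < s) ↦ ENNReal.ofReal s * ν {x | s < g x} ^ (1 / q))
        s hs
  have hlayer := lintegral_le_of_meas_lt_le_mul_rpow_neg hg0 hg hq (by positivity)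
    (by positivity : 0 < (q - 1) / q * t) hdist
  have huniv : ν Set.univ = ENNReal.ofReal (ν.real Set.univ) :=
    (ENNReal.ofReal_toReal (measure_ne_top ν _)).symm
  have hreal := hmean.trans hlayer
  rw [huniv, ← ENNReal.ofReal_mul ht.le, ← ENNReal.ofReal_mul measureReal_nonneg,
    ← ENNReal.ofReal_add (by positivity) (by positivity),
    ENNReal.ofReal_le_ofReal_iff (by positivity)] at hreal
  calc ENNReal.ofReal t * ν Set.univ ^ (1 / q)
      = ENNReal.ofReal (t * ν.real Set.univ ^ (1 / q)) := by
        rw [huniv, ENNReal.ofReal_rpow_of_nonneg measureReal_nonneg (by positivity),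
          ENNReal.ofReal_mul ht.le]
    _ ≤ ENNReal.ofReal (q / (q - 1) * c.toReal) := ENNReal.ofReal_le_ofReal
        (mul_rpow_one_div_le_of_le_layerCake ht hq measureReal_nonneg ENNReal.toReal_nonneg hreal)
    _ = ENNReal.ofReal (q / (q - 1)) * c := by
        rw [ENNReal.ofReal_mul (by positivity), ENNReal.ofReal_toReal hc]

end WeakType

/-- **Inequality (3.8)**: for `q > 1`, `t > 0` and `A_t = {M*(h) ≥ t}`,
`t · μ{M*(h) ≥ t}^{1/q} ≤ q/(q-1) · ‖h·1_{A_t}‖_{q,∞}`. -/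
theorem stmt13 {Ω : Type*} [MeasurableSpace Ω] (μ : Measure Ω) [IsProbabilityMeasure μ]
    (T : Ω ≃ᵐ Ω) (hT : MeasurePreserving (⇑T) μ μ)
    (q : ℝ) (hq : 1 < q)
    (h : Ω → ℝ) (hmeas : Measurable h) (hint : Integrable h μ)
    (t : ℝ) (ht : 0 < t) :
    ENNReal.ofReal t * (μ {ω | ENNReal.ofReal t ≤ maxFn (⇑T) h ω}) ^ (1 / q) ≤
      ENNReal.ofReal (q / (q - 1)) *
        ⨆ (s : ℝ) (_ : 0 < s), ENNReal.ofReal s *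
          (μ ({ω | s < |h ω|} ∩ {ω | ENNReal.ofReal t ≤ maxFn (⇑T) h ω})) ^ (1 / q) := by
  set A := {ω | ENNReal.ofReal t ≤ maxFn (⇑T) h ω}
  have hwiener : ENNReal.ofReal t * μ.restrict A Set.univ ≤
      ∫⁻ ω, ENNReal.ofReal |h ω| ∂μ.restrict A := by
    rw [Measure.restrict_apply_univ, ← ofReal_measureReal, ← ENNReal.ofReal_mul ht.le,
      ← ofReal_integral_eq_lintegral_ofReal hint.abs.integrableOn
        (ae_of_all _ fun _ ↦ abs_nonneg _)]
    exact ENNReal.ofReal_le_ofReal (mul_measureReal_ofReal_le_maxFn_le hT hint hmeas ht)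
  have hslice (s : ℝ) : μ.restrict A {ω | s < |h ω|} = μ ({ω | s < |h ω|} ∩ A) :=
    Measure.restrict_apply (measurableSet_lt measurable_const hmeas.abs)
  simpa only [hslice, Measure.restrict_apply_univ] using
    ofReal_mul_rpow_le_of_le_lintegral (fun ω ↦ abs_nonneg (h ω)) hmeas.abs.aemeasurable hq ht
      hwiener
end
end

section
/- Let g : Ω → ℝ be measurable, let ε > 0, and let 1 ≤ k ≤ n be integers. Then μ{ max_{1 ≤ j ≤ n} |g ∘ T^j| > 2ε n^{1/2} } ≤ (⌊n/k⌋ + 1) · μ{ |g| > ε n^{1/2} } + (⌊n/k⌋ + 1) · μ{ M*(g − g∘T) > ε n^{1/2}/k }. -/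
open MeasureTheory Filter Topology
open scoped ENNReal NNReal

noncomputable section

/-!
Write `c = ε √n` and `h = g - g ∘ T`. If `|g (T^j ω)| > 2c` for some `1 ≤ j ≤ n`, split
`j = q k + r` with `0 ≤ r < k` and put `y = T^{qk} ω`. Either `|g y| > c`, or the telescoping
sum `S_r(h)(y) = g y - g (T^r y)` exceeds `c` in absolute value, which forces `r ≥ 1` and
`M*(h)(y) ≥ |S_r(h)(y)| / r > c / k`. Hence the event is covered by the `⌊n/k⌋ + 1` sets
`T^{-qk}({|g| > c} ∪ {M*(h) > c/k})`, each of measure at most `μ({|g| > c} ∪ {M*(h) > c/k})`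
because `T` preserves `μ`.
-/

section Iterate

variable {Ω : Type*} (f : Ω → Ω)

theorem partialSumT_sub_comp (g : Ω → ℝ) (r : ℕ) (y : Ω) :
    partialSumT f (fun x => g x - g (f x)) r y = g y - g (f^[r] y) := by
  unfold partialSumT
  simp only [← Function.iterate_succ_apply' f]
  exact Finset.sum_range_sub' (fun i => g (f^[i] y)) r

theorem ofReal_abs_partialSumT_div_le_maxFn (h : Ω → ℝ) {r : ℕ} (hr : 0 < r) (y : Ω) :
    ENNReal.ofReal (|partialSumT f h r y| / r) ≤ maxFn f h y := by
  obtain ⟨m, rfl⟩ : ∃ m, r = m + 1 := ⟨r - 1, by omega⟩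
  refine le_iSup_of_le m (le_of_eq ?_)
  rw [ENNReal.ofReal_div_of_pos (by positivity), ← Real.enorm_eq_ofReal_abs, enorm_eq_nnnorm,
    ENNReal.ofReal_natCast, Nat.cast_succ]

theorem iterate_div_mul_mem_of_two_mul_lt_abs (g : Ω → ℝ) {c : ℝ} {k j : ℕ} (hk : 0 < k)
    {ω : Ω} (hj : 2 * c < |g (f^[j] ω)|) :
    f^[j / k * k] ω ∈ {x | c < |g x|} ∪
      {x | ENNReal.ofReal (c / k) < maxFn f (fun x => g x - g (f x)) x} := by
  set y := f^[j / k * k] ω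
  have hjy : f^[j] ω = f^[j % k] y := by
    rw [← Function.iterate_add_apply, Nat.mod_add_div']
  by_cases hgy : c < |g y|
  · exact Or.inl hgy
  right
  rw [not_lt] at hgy
  have hc : 0 ≤ c := (abs_nonneg _).trans hgy
  have hS : c < |partialSumT f (fun x => g x - g (f x)) (j % k) y| := by
    rw [partialSumT_sub_comp, ← hjy, abs_sub_comm]
    linarith [abs_sub_abs_le_abs_sub (g (f^[j] ω)) (g y)]
  have hr : 0 < j % k := Nat.pos_of_ne_zero fun h0 => by
    simp only [h0, partialSumT, Finset.range_zero, Finset.sum_empty, abs_zero] at hS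
    linarith
  have hr' : (0 : ℝ) < (j % k : ℕ) := by exact_mod_cast hr
  refine lt_of_lt_of_le ?_ (ofReal_abs_partialSumT_div_le_maxFn f _ hr y)
  have hpos : 0 < |partialSumT f (fun x => g x - g (f x)) (j % k) y| / (j % k : ℕ) :=
    lt_of_le_of_lt (by positivity) (div_lt_div_of_pos_right hS hr')
  rw [ENNReal.ofReal_lt_ofReal_iff hpos]
  calc c / k ≤ c / (j % k : ℕ) :=
        div_le_div_of_nonneg_left hc hr' (by exact_mod_cast (Nat.mod_lt j hk).le)
    _ < _ := div_lt_div_of_pos_right hS hr'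

end Iterate

theorem measure_biUnion_preimage_iterate_le {Ω : Type*} [MeasurableSpace Ω] {μ : Measure Ω}
    {f : Ω → Ω} (hf : MeasurePreserving f μ μ) {ι : Type*} (I : Finset ι) (e : ι → ℕ)
    (s : Set Ω) : μ (⋃ i ∈ I, f^[e i] ⁻¹' s) ≤ I.card * μ s :=
  calc μ (⋃ i ∈ I, f^[e i] ⁻¹' s) ≤ ∑ i ∈ I, μ (f^[e i] ⁻¹' s) := measure_biUnion_finset_le _ _
    _ ≤ ∑ _i ∈ I, μ s := Finset.sum_le_sum fun i _ => (hf.iterate (e i)).measure_preimage_le s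
    _ = I.card * μ s := by rw [Finset.sum_const, nsmul_eq_mul]

theorem stmt15_general {Ω : Type*} [MeasurableSpace Ω] (μ : Measure Ω)
    (T : Ω ≃ᵐ Ω) (hT : MeasurePreserving (⇑T) μ μ)
    (g : Ω → ℝ)
    (ε : ℝ)
    (k n : ℕ) (hk : 1 ≤ k) (hkn : k ≤ n) :
    μ {ω | 2 * ε * Real.sqrt n <
        ((((Finset.Icc 1 n).sup fun j => ‖g ((⇑T)^[j] ω)‖₊ : ℝ≥0)) : ℝ)} ≤
      ((n / k : ℕ) + 1 : ℝ≥0∞) * μ {ω | ε * Real.sqrt n < |g ω|} +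
      ((n / k : ℕ) + 1 : ℝ≥0∞) *
        μ {ω | ENNReal.ofReal (ε * Real.sqrt n / k) <
          maxFn (⇑T) (fun x => g x - g (T x)) ω} := by
  set B := {ω | ε * Real.sqrt n < |g ω|}
  set C := {ω | ENNReal.ofReal (ε * Real.sqrt n / k) < maxFn (⇑T) (fun x => g x - g (T x)) ω}
  have hcover : {ω | 2 * ε * Real.sqrt n <
      ((((Finset.Icc 1 n).sup fun j => ‖g ((⇑T)^[j] ω)‖₊ : ℝ≥0)) : ℝ)} ⊆
      ⋃ q ∈ Finset.range (n / k + 1), (⇑T)^[q * k] ⁻¹' (B ∪ C) := by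
    intro ω hω
    obtain ⟨j, hj, hjsup⟩ := Finset.exists_mem_eq_sup _ (Finset.nonempty_Icc.2 (hk.trans hkn))
      fun j => ‖g ((⇑T)^[j] ω)‖₊
    have hj2c : 2 * (ε * Real.sqrt n) < |g ((⇑T)^[j] ω)| := by
      rw [← mul_assoc]
      simpa [hjsup] using hω
    exact Set.mem_biUnion
      (Finset.mem_range.2 (Nat.lt_succ_of_le (Nat.div_le_div_right (Finset.mem_Icc.1 hj).2)))
      (iterate_div_mul_mem_of_two_mul_lt_abs _ g hk hj2c)
  calc μ _ ≤ μ (⋃ q ∈ Finset.range (n / k + 1), (⇑T)^[q * k] ⁻¹' (B ∪ C)) := measure_mono hcover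
    _ ≤ ((n / k : ℕ) + 1 : ℝ≥0∞) * μ (B ∪ C) := by
      have := measure_biUnion_preimage_iterate_le hT (Finset.range (n / k + 1)) (· * k) (B ∪ C)
      rwa [Finset.card_range, Nat.cast_succ] at this
    _ ≤ ((n / k : ℕ) + 1 : ℝ≥0∞) * (μ B + μ C) := by gcongr; exact measure_union_le _ _
    _ = _ := mul_add _ _ _

/-- **Inequality (3.11)**: for `1 ≤ k ≤ n` and `ε > 0`,
`μ{max_{1≤j≤n} |g∘T^j| > 2ε√n} ≤ (⌊n/k⌋+1)(μ{|g| > ε√n} + μ{M*(g-g∘T) > ε√n/k})`. -/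
theorem stmt15 {Ω : Type*} [MeasurableSpace Ω] (μ : Measure Ω) [IsProbabilityMeasure μ]
    (T : Ω ≃ᵐ Ω) (hT : MeasurePreserving (⇑T) μ μ)
    (g : Ω → ℝ) (hg : Measurable g)
    (ε : ℝ) (hε : 0 < ε)
    (k n : ℕ) (hk : 1 ≤ k) (hkn : k ≤ n) :
    μ {ω | 2 * ε * Real.sqrt n <
        ((((Finset.Icc 1 n).sup fun j => ‖g ((⇑T)^[j] ω)‖₊ : ℝ≥0)) : ℝ)} ≤
      ((n / k : ℕ) + 1 : ℝ≥0∞) * μ {ω | ε * Real.sqrt n < |g ω|} +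
      ((n / k : ℕ) + 1 : ℝ≥0∞) *
        μ {ω | ENNReal.ofReal (ε * Real.sqrt n / k) <
          maxFn (⇑T) (fun x => g x - g (T x)) ω} :=
  stmt15_general μ T hT g ε k n hk hkn
end
end
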